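/- For fixed β ∈ [0,1/2], the function g₂(δ) = h(β*δ) - h(δ) is monotonically non-increasing in δ on [0,1/2], where h is the binary entropy function and * denotes binary convolution a*b = a(1-b)+(1-a)b. -/

import Mathlib

/-!
Differentiating, `g₂'(δ) = (1 - 2β) φ(β * δ) - φ(δ)` with `φ(p) = log(1 - p) - log p` the
derivative of the entropy. On `(0, 1/2]` the function `φ` is nonnegative and decreasing, and
`δ ≤ β * δ ≤ 1/2`, so `(1 - 2β) φ(β * δ) ≤ φ(β * δ) ≤ φ(δ)`.
-/

open Real Set

lemma neg_mul_logb_sub_eq_binEntropy_div_log_two (x : ℝ) :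
    -x * logb 2 x - (1 - x) * logb 2 (1 - x) = binEntropy x / log 2 := by
  rw [binEntropy, logb, logb, log_inv, log_inv]
  ring

lemma log_one_sub_sub_log_nonneg {p : ℝ} (hp₀ : 0 < p) (hp : p ≤ 1 / 2) :
    0 ≤ log (1 - p) - log p :=
  sub_nonneg.2 (log_le_log hp₀ (by linarith))

lemma log_one_sub_sub_log_le_of_le {p q : ℝ} (hp₀ : 0 < p) (hpq : p ≤ q) (hq₁ : q < 1) :
    log (1 - q) - log q ≤ log (1 - p) - log p := by
  have h₁ := log_le_log (by linarith) (by linarith : 1 - q ≤ 1 - p)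
  have h₂ := log_le_log hp₀ hpq
  linarith

def binConv (a b : ℝ) : ℝ := a * (1 - b) + (1 - a) * b

lemma binConv_eq (a b : ℝ) : binConv a b = a + (1 - 2 * a) * b := by
  rw [binConv]
  ring

lemma continuous_binConv (a : ℝ) : Continuous (binConv a) := by
  unfold binConv
  fun_prop

lemma hasDerivAt_binConv (a b : ℝ) : HasDerivAt (binConv a) (1 - 2 * a) b := by
  simpa [funext (binConv_eq a)] using ((hasDerivAt_id b).const_mul (1 - 2 * a)).const_add a

section

variable {β δ : ℝ} (hβ : β ∈ Icc (0 : ℝ) (1 / 2)) (hδ : δ ∈ Icc (0 : ℝ) (1 / 2))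
include hβ hδ

lemma le_binConv : δ ≤ binConv β δ := by
  rw [binConv_eq]
  nlinarith [hβ.1, hδ.2]

lemma binConv_le_half : binConv β δ ≤ 1 / 2 := by
  rw [binConv_eq]
  nlinarith [hβ.2, hδ.2]

end

lemma binEntropy_binConv_sub_antitoneOn {β : ℝ} (hβ : β ∈ Icc (0 : ℝ) (1 / 2)) :
    AntitoneOn (fun δ => binEntropy (binConv β δ) - binEntropy δ) (Icc 0 (1 / 2)) := by
  refine antitoneOn_of_hasDerivWithinAt_nonpos (convex_Icc 0 (1 / 2))
    (f' := fun δ => (log (1 - binConv β δ) - log (binConv β δ)) * (1 - 2 * β)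
      - (log (1 - δ) - log δ))
    ((binEntropy_continuous.comp (continuous_binConv β)).sub binEntropy_continuous).continuousOn
    ?_ ?_
  all_goals
    intro δ hδ
    rw [interior_Icc] at hδ
    have hδ' : δ ∈ Icc (0 : ℝ) (1 / 2) := Ioo_subset_Icc_self hδ
    have hc₀ : 0 < binConv β δ := hδ.1.trans_le (le_binConv hβ hδ')
    have hc₁ : binConv β δ < 1 := (binConv_le_half hβ hδ').trans_lt (by norm_num)
  · exact (((hasDerivAt_binEntropy hc₀.ne' hc₁.ne).comp δ (hasDerivAt_binConv β δ)).sub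
      (hasDerivAt_binEntropy hδ.1.ne' (by linarith [hδ.2]))).hasDerivWithinAt
  · rw [sub_nonpos]
    calc (log (1 - binConv β δ) - log (binConv β δ)) * (1 - 2 * β)
        ≤ log (1 - binConv β δ) - log (binConv β δ) :=
          mul_le_of_le_one_right (log_one_sub_sub_log_nonneg hc₀ (binConv_le_half hβ hδ'))
            (by linarith [hβ.1])
      _ ≤ log (1 - δ) - log δ := log_one_sub_sub_log_le_of_le hδ.1 (le_binConv hβ hδ') hc₁

/-- For fixed `β ∈ [0,1/2]`, the function `δ ↦ h(β*δ) - h(δ)` is non-increasing on `[0,1/2]`. -/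
theorem binEntropy_conv_sub_antitone (β : ℝ) (hβ : β ∈ Set.Icc (0 : ℝ) (1 / 2))
    (h : ℝ → ℝ) (hdef : ∀ x, h x = -x * Real.logb 2 x - (1 - x) * Real.logb 2 (1 - x))
    (conv : ℝ → ℝ → ℝ) (hconv : ∀ a b, conv a b = a * (1 - b) + (1 - a) * b) :
    ∀ δ δ' : ℝ, δ ∈ Set.Icc (0 : ℝ) (1 / 2) → δ' ∈ Set.Icc (0 : ℝ) (1 / 2) → δ ≤ δ' →
      h (conv β δ') - h δ' ≤ h (conv β δ) - h δ := by
  intro δ δ' hδ hδ' hle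
  obtain rfl : h = fun x => binEntropy x / log 2 :=
    funext fun x => (hdef x).trans (neg_mul_logb_sub_eq_binEntropy_div_log_two x)
  obtain rfl : conv = binConv := funext₂ hconv
  simp only [div_sub_div_same]
  exact div_le_div_of_nonneg_right (binEntropy_binConv_sub_antitoneOn hβ hδ hδ' hle)
    (log_pos one_lt_two).le
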